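/- Concatenation of convex polygons along a common boundary edge, defined to be the concatenated polygon when convex and zero otherwise, yields an associative product. Precisely: model a 'polygon from p to p'' as a finite strictly decreasing-argument sequence of complex numbers from W(p) to W(p') (with respect to a fixed direction at infinity ζ). If Q ∈ 𝒬_{p,p'} and Q' ∈ 𝒬_{p',p''}, declare Q·Q' = Q ∪ Q' if the concatenated vertex sequence is still convex, and 0 otherwise. Then (Q·Q')·Q'' = Q·(Q'·Q'') for all composable Q, Q', Q'', in the free abelian group on polygons adjoined with 0. -/

import Mathlib

open scoped Classical

/-- A polygon from `p` to `p'` is modelled as the list of its finite vertices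
`W(p) = w₀, w₁, …, w_k = W(p')`; concatenation along the shared endpoint. -/
def concatPoly (q q' : List ℂ) : List ℂ := q ++ q'.tail

/-- The sequence of edges of the polygon obtained by adjoining the vertex at infinity in
direction `ζ`: edge `-ζ` coming down from infinity to `w₀`, then the finite edges, then edge
`ζ` going back to infinity. -/
def edgeSeq (ζ : ℂ) (l : List ℂ) : List ℂ :=
  (-ζ) :: (((l.zip l.tail).map fun p => p.2 - p.1) ++ [ζ])

/-- Convexity with clockwise-ordered vertices: each pair of consecutive edges turns
clockwise (negative cross product `Im(ē·e') < 0`). -/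
def ConvexPoly (ζ : ℂ) (l : List ℂ) : Prop :=
  List.Chain' (fun e e' => (starRingEnd ℂ e * e').im < 0) (edgeSeq ζ l)

/-- Product of two polygons: the concatenation if it is convex, zero (`none`) otherwise. -/
noncomputable def polyMul (ζ : ℂ) (q q' : List ℂ) : Option (List ℂ) :=
  if ConvexPoly ζ (concatPoly q q') then some (concatPoly q q') else none

/-- Extension of the product to the free abelian group on polygons adjoined with zero
(modelled on the `Option` of generators, `none` playing the role of `0`). -/
noncomputable def polyMulOpt (ζ : ℂ) : Option (List ℂ) → Option (List ℂ) → Option (List ℂ)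
  | some q, some q' => polyMul ζ q q'
  | _, _ => none

/-!
Both products are, as vertex lists, the same triple concatenation `Q ++ Q'.tail ++ Q''.tail`,
so it suffices that convexity of the triple forces convexity of `Q·Q'` and of `Q'·Q''`.
Convexity is a condition on consecutive pairs of the edge sequence `-ζ, edges, ζ`. The turns
of `Q·Q'` are those of the triple up to the last edge of `Q'`, followed by the turn from that
edge to `ζ`, which `Q'` itself makes; symmetrically for `Q'·Q''`. The convexity of `Q'` also
guarantees that it has an edge, since `-ζ` followed directly by `ζ` is not a clockwise turn.
-/

def edges (l : List ℂ) : List ℂ := (l.zip l.tail).map fun p => p.2 - p.1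

@[simp] lemma edges_nil : edges [] = [] := rfl

@[simp] lemma edges_cons_cons (a b : ℂ) (l : List ℂ) :
    edges (a :: b :: l) = (b - a) :: edges (b :: l) := rfl

lemma edges_concatPoly {q q' : List ℂ} (h : q.getLast? = q'.head?) :
    edges (concatPoly q q') = edges q ++ edges q' := by
  unfold concatPoly
  induction q using List.twoStepInduction with
  | nil => simp_all [List.head?_eq_none_iff.mp h.symm]
  | singleton a =>
    obtain ⟨t, rfl⟩ : ∃ t, q' = a :: t := by
      cases q' <;> simp_all
    rfl
  | cons_cons a b l _ ih =>
    rw [List.getLast?_cons_cons] at h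
    simpa using ih b h

lemma head?_concatPoly {q q' : List ℂ} (hq : q ≠ []) : (concatPoly q q').head? = q.head? := by
  cases q <;> simp_all [concatPoly]

lemma concatPoly_assoc (q : List ℂ) {q' : List ℂ} (q'' : List ℂ) (hq' : q' ≠ []) :
    concatPoly (concatPoly q q') q'' = concatPoly q (concatPoly q' q'') := by
  cases q' <;> simp_all [concatPoly]

namespace List.IsChain

variable {α : Type*} {R : α → α → Prop} {l₀ l₁ l₂ m : List α}

theorem splice_tail (h : IsChain R (l₁ ++ m ++ l₂)) (hm : IsChain R (m ++ l₀)) (hne : m ≠ []) :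
    IsChain R (l₁ ++ m ++ l₀) := by
  obtain ⟨m, c, rfl⟩ := (List.eq_nil_or_concat' m).resolve_left hne
  simp only [List.append_assoc, List.singleton_append] at h hm ⊢
  rw [← List.append_assoc, List.isChain_split] at h ⊢
  rw [List.isChain_split] at hm
  exact ⟨h.1, hm.2⟩

theorem splice_head (h : IsChain R (l₁ ++ m ++ l₂)) (hm : IsChain R (l₀ ++ m)) (hne : m ≠ []) :
    IsChain R (l₀ ++ m ++ l₂) := by
  obtain ⟨c, m, rfl⟩ := List.exists_cons_of_ne_nil hne
  simp only [List.append_assoc, List.cons_append] at h hm ⊢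
  rw [List.isChain_split] at h hm ⊢
  exact ⟨hm.1, h.2⟩

end List.IsChain

lemma convexPoly_iff (ζ : ℂ) (l : List ℂ) :
    ConvexPoly ζ l ↔
      List.IsChain (fun e e' => (starRingEnd ℂ e * e').im < 0) ([-ζ] ++ edges l ++ [ζ]) :=
  Iff.rfl

namespace ConvexPoly

variable {ζ : ℂ} {q m r : List ℂ}

lemma edges_ne_nil (h : ConvexPoly ζ m) : edges m ≠ [] := by
  intro he
  have hturn : (starRingEnd ℂ (-ζ) * ζ).im = 0 := by simp [Complex.mul_im, mul_comm]
  rw [convexPoly_iff, he, List.append_nil, List.singleton_append, List.isChain_pair] at h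
  exact h.ne hturn

lemma ne_nil (h : ConvexPoly ζ m) : m ≠ [] := by
  rintro rfl
  exact h.edges_ne_nil edges_nil

lemma edges_concatPoly_concatPoly (hm : ConvexPoly ζ m) (hqm : q.getLast? = m.head?)
    (hmr : m.getLast? = r.head?) :
    edges (concatPoly q (concatPoly m r)) = edges q ++ edges m ++ edges r := by
  rw [edges_concatPoly (hqm.trans (head?_concatPoly hm.ne_nil).symm), edges_concatPoly hmr,
    List.append_assoc]

lemma left_of_concatPoly (h : ConvexPoly ζ (concatPoly q (concatPoly m r)))
    (hm : ConvexPoly ζ m) (hqm : q.getLast? = m.head?) (hmr : m.getLast? = r.head?) :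
    ConvexPoly ζ (concatPoly q m) := by
  rw [convexPoly_iff, hm.edges_concatPoly_concatPoly hqm hmr] at h
  have hm' : List.IsChain _ (edges m ++ [ζ]) :=
    ((convexPoly_iff ζ m).mp hm).suffix (List.suffix_append [-ζ] _)
  have := List.IsChain.splice_tail (l₁ := [-ζ] ++ edges q) (l₂ := edges r ++ [ζ])
    (by simpa only [List.append_assoc] using h) hm' hm.edges_ne_nil
  rw [convexPoly_iff, edges_concatPoly hqm]
  simpa only [List.append_assoc] using this

lemma right_of_concatPoly (h : ConvexPoly ζ (concatPoly q (concatPoly m r)))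
    (hm : ConvexPoly ζ m) (hqm : q.getLast? = m.head?) (hmr : m.getLast? = r.head?) :
    ConvexPoly ζ (concatPoly m r) := by
  rw [convexPoly_iff, hm.edges_concatPoly_concatPoly hqm hmr] at h
  have hm' : List.IsChain _ ([-ζ] ++ edges m) :=
    ((convexPoly_iff ζ m).mp hm).prefix (List.prefix_append _ [ζ])
  have := List.IsChain.splice_head (l₁ := [-ζ] ++ edges q) (l₂ := edges r ++ [ζ])
    (by simpa only [List.append_assoc] using h) hm' hm.edges_ne_nil
  rw [convexPoly_iff, edges_concatPoly hmr]
  simpa only [List.append_assoc] using this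

end ConvexPoly

theorem stmt11_general (ζ : ℂ)
    (Q Q' Q'' : List ℂ)
    (hQ' : ConvexPoly ζ Q')
    (h1 : Q.getLast? = Q'.head?) (h2 : Q'.getLast? = Q''.head?) :
    polyMulOpt ζ (polyMul ζ Q Q') (some Q'') =
      polyMulOpt ζ (some Q) (polyMul ζ Q' Q'') := by
  have hassoc : concatPoly (concatPoly Q Q') Q'' = concatPoly Q (concatPoly Q' Q'') :=
    concatPoly_assoc Q Q'' hQ'.ne_nil
  have hleft (h : ConvexPoly ζ (concatPoly Q (concatPoly Q' Q''))) :
      ConvexPoly ζ (concatPoly Q Q') :=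
    h.left_of_concatPoly hQ' h1 h2
  have hright (h : ConvexPoly ζ (concatPoly Q (concatPoly Q' Q''))) :
      ConvexPoly ζ (concatPoly Q' Q'') :=
    h.right_of_concatPoly hQ' h1 h2
  unfold polyMul
  split_ifs <;> simp_all [polyMulOpt, polyMul]

/-- Concatenation of convex polygons along a common boundary edge, defined to
be the concatenated polygon when convex and zero otherwise, is associative:
`(Q·Q')·Q'' = Q·(Q'·Q'')` for all composable convex polygons `Q, Q', Q''`. -/
theorem stmt11 (ζ : ℂ) (hζ : ‖ζ‖ = 1)
    (Q Q' Q'' : List ℂ)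
    (hQ : ConvexPoly ζ Q) (hQ' : ConvexPoly ζ Q') (hQ'' : ConvexPoly ζ Q'')
    (hQne : Q ≠ []) (hQ'ne : Q' ≠ []) (hQ''ne : Q'' ≠ [])
    (h1 : Q.getLast? = Q'.head?) (h2 : Q'.getLast? = Q''.head?) :
    polyMulOpt ζ (polyMul ζ Q Q') (some Q'') =
      polyMulOpt ζ (some Q) (polyMul ζ Q' Q'') :=
  stmt11_general ζ Q Q' Q'' hQ' h1 h2
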